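/- arXiv:2112.10545 — 3 statements merged into one kernel-verified Lean document; each statement's English description precedes it below -/
import Mathlib

section
/- Let (A_N, B_N), N = 1, 2, …, be random vectors in ℝ^m × ℝ converging in distribution to (A, B), and let (b_N) be a sequence of real numbers with b_N → b_∞ ∈ ℝ. Suppose P(B = b_∞) = 0 and P(B ≤ b_∞) > 0. Then the conditional distribution of A_N given {B_N ≤ b_N} and the conditional distribution of A_N given {B_N ≤ b_∞} both converge weakly to the conditional distribution of A given {B ≤ b_∞}; in particular, the two conditioned sequences have the same limiting distribution. -/
/-!
Conditioning on `{Y ≤ t}` and pushing forward by `X` turns `∫ f` into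
`(μ.real {Y ≤ t})⁻¹ * ∫ q in {Y ≤ t}, f (X q)`, so it suffices that
`∫ q in {Y ≤ t N}, g q ∂μs N → ∫ q in {Y ≤ c}, g q ∂μ` for bounded continuous `g`
(with `g = 1` for the normalising masses). Replace the indicator of `{Y ≤ t N}` by a ramp in `Y`
falling from `1` to `0` on `[c, c + δ]`: once `|t N - c| ≤ δ` this moves the integral by at most
`‖g‖` times the mass of the strip `{|Y - c| ≤ δ}`. That mass is small for `μ` because
`μ {Y = c} = 0`, hence eventually small for `μs N` by the portmanteau theorem for closed sets,
while the integrals of the continuous ramped function converge by weak convergence.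
-/

open MeasureTheory ProbabilityTheory Matrix Filter
open scoped NNReal Topology

noncomputable section

/-- Weak convergence of a sequence of measures: integrals of every bounded continuous
real-valued function converge. -/
def TendstoWeakly {E : Type*} [MeasurableSpace E] [TopologicalSpace E]
    (μs : ℕ → Measure E) (μ : Measure E) : Prop :=
  ∀ f : BoundedContinuousFunction E ℝ,
    Tendsto (fun N => ∫ x, f x ∂(μs N)) atTop (𝓝 (∫ x, f x ∂μ))

open Metric BoundedContinuousFunction

def rampDown (c δ : ℝ) : ℝ →ᵇ ℝ :=
  mkOfBound ⟨fun s => max 0 (min 1 ((c + δ - s) / δ)), by fun_prop⟩ 1 fun _ _ =>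
    abs_sub_le_of_nonneg_of_le (le_max_left _ _) (max_le zero_le_one (min_le_left _ _))
      (le_max_left _ _) (max_le zero_le_one (min_le_left _ _))

lemma rampDown_apply (c δ s : ℝ) : rampDown c δ s = max 0 (min 1 ((c + δ - s) / δ)) := rfl

lemma rampDown_nonneg (c δ s : ℝ) : 0 ≤ rampDown c δ s := le_max_left _ _

lemma rampDown_le_one (c δ s : ℝ) : rampDown c δ s ≤ 1 := max_le zero_le_one (min_le_left _ _)

lemma rampDown_of_le {c δ s : ℝ} (hδ : 0 < δ) (hs : s ≤ c) : rampDown c δ s = 1 := by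
  have : 1 ≤ (c + δ - s) / δ := (one_le_div hδ).mpr (by linarith)
  rw [rampDown_apply, min_eq_left this, max_eq_right zero_le_one]

lemma rampDown_of_ge {c δ s : ℝ} (hδ : 0 < δ) (hs : c + δ ≤ s) : rampDown c δ s = 0 := by
  have : (c + δ - s) / δ ≤ 0 := div_nonpos_of_nonpos_of_nonneg (by linarith) hδ.le
  rw [rampDown_apply, min_eq_right (this.trans zero_le_one), max_eq_left this]

lemma abs_indicator_Iic_sub_rampDown_le {c δ t : ℝ} (hδ : 0 < δ) (ht : |t - c| ≤ δ) (s : ℝ) :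
    |(Set.Iic t).indicator 1 s - rampDown c δ s| ≤ (closedBall c δ).indicator 1 s := by
  rw [abs_le] at ht
  by_cases hs : s ∈ closedBall c δ
  · rw [Set.indicator_of_mem hs]
    refine abs_sub_le_of_nonneg_of_le (Set.indicator_nonneg (fun _ _ => zero_le_one) s) ?_
      (rampDown_nonneg c δ s) (rampDown_le_one c δ s)
    exact Set.indicator_le_self' (fun _ _ => zero_le_one) s
  · rw [Set.indicator_of_notMem hs]
    rw [mem_closedBall, Real.dist_eq, abs_le, not_and_or, not_le, not_le] at hs
    rcases hs with hs | hs
    · rw [Set.indicator_of_mem (show s ∈ Set.Iic t by simp only [Set.mem_Iic]; linarith),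
        rampDown_of_le hδ (by linarith)]
      simp
    · rw [Set.indicator_of_notMem (show s ∉ Set.Iic t by simp only [Set.mem_Iic]; linarith),
        rampDown_of_ge hδ (by linarith)]
      simp

lemma exists_pos_measureReal_preimage_closedBall_lt {Ω : Type*} [MeasurableSpace Ω]
    (μ : Measure Ω) [IsFiniteMeasure μ] {Y : Ω → ℝ} (hY : Measurable Y) {c : ℝ}
    (hzero : μ {q | Y q = c} = 0) {η : ℝ} (hη : 0 < η) :
    ∃ δ > 0, μ.real (Y ⁻¹' closedBall c δ) < η := by
  have hlim : Tendsto (fun δ => μ (Y ⁻¹' closedBall c δ)) (𝓝[>] 0) (𝓝 0) := by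
    have h := tendsto_measure_biInter_gt (μ := μ) (s := fun δ => Y ⁻¹' closedBall c δ) (a := 0)
      (fun δ _ => (hY isClosed_closedBall.measurableSet).nullMeasurableSet)
      (fun _ _ _ hij => Set.preimage_mono (closedBall_subset_closedBall hij))
      ⟨1, one_pos, measure_ne_top μ _⟩
    rwa [← Set.preimage_iInter₂, biInter_gt_closedBall, closedBall_zero,
      show Y ⁻¹' {c} = {q | Y q = c} from rfl, hzero] at h
  obtain ⟨δ, hδ, hδpos⟩ := ((hlim.eventually (gt_mem_nhds (ENNReal.ofReal_pos.mpr hη))).and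
    self_mem_nhdsWithin).exists
  exact ⟨δ, hδpos, ENNReal.toReal_lt_of_lt_ofReal hδ⟩

section

variable {Ω : Type*} [TopologicalSpace Ω] [MeasurableSpace Ω] [OpensMeasurableSpace Ω]
  {Y : Ω → ℝ} {c : ℝ}

lemma abs_setIntegral_sub_integral_rampDown_le (ν : Measure Ω) [IsFiniteMeasure ν]
    (hY : Continuous Y) {δ t : ℝ} (g : Ω →ᵇ ℝ) (hδ : 0 < δ) (ht : |t - c| ≤ δ) :
    |∫ q in {q | Y q ≤ t}, g q ∂ν - ∫ q, g q * rampDown c δ (Y q) ∂ν|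
      ≤ ‖g‖ * ν.real (Y ⁻¹' closedBall c δ) := by
  have hE : MeasurableSet {q | Y q ≤ t} := measurableSet_le hY.measurable measurable_const
  have hS : MeasurableSet (Y ⁻¹' closedBall c δ) :=
    hY.measurable isClosed_closedBall.measurableSet
  have hdiff : ∫ q in {q | Y q ≤ t}, g q ∂ν - ∫ q, g q * rampDown c δ (Y q) ∂ν
      = ∫ q, g q * ((Set.Iic t).indicator 1 (Y q) - rampDown c δ (Y q)) ∂ν := by
    rw [← integral_indicator hE, ← integral_sub]
    · congr 1 with q
      by_cases hq : Y q ≤ t <;> simp [Set.indicator, hq, mul_sub]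
    · exact (g.integrable ν).indicator hE
    · refine (g.integrable ν).mul_bdd (c := 1)
        ((rampDown c δ).continuous.comp hY).aestronglyMeasurable (ae_of_all _ fun q => ?_)
      rw [Real.norm_eq_abs, abs_of_nonneg (rampDown_nonneg c δ _)]
      exact rampDown_le_one c δ (Y q)
  calc |∫ q in {q | Y q ≤ t}, g q ∂ν - ∫ q, g q * rampDown c δ (Y q) ∂ν|
      ≤ ∫ q, ‖g‖ * (Y ⁻¹' closedBall c δ).indicator 1 q ∂ν := by
        rw [hdiff, ← Real.norm_eq_abs]
        refine norm_integral_le_of_norm_le ((integrable_const _).indicator hS |>.const_mul _)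
          (ae_of_all _ fun q => ?_)
        rw [norm_mul, Real.norm_eq_abs]
        exact mul_le_mul (g.norm_coe_le_norm q) (abs_indicator_Iic_sub_rampDown_le hδ ht (Y q))
          (abs_nonneg _) (norm_nonneg g)
    _ = ‖g‖ * ν.real (Y ⁻¹' closedBall c δ) := by
        rw [integral_const_mul, integral_indicator_one hS]

variable [HasOuterApproxClosed Ω] {μs : ℕ → Measure Ω} {μ : Measure Ω}
  [∀ N, IsFiniteMeasure (μs N)] [IsFiniteMeasure μ]

lemma TendstoWeakly.eventually_measureReal_lt (h : TendstoWeakly μs μ) {F : Set Ω}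
    (hF : IsClosed F) {η : ℝ} (hη : μ.real F < η) :
    ∀ᶠ N in atTop, (μs N).real F < η := by
  let ν : ℕ → FiniteMeasure Ω := fun N => ⟨μs N, inferInstance⟩
  have hν : Tendsto ν atTop (𝓝 ⟨μ, inferInstance⟩) :=
    FiniteMeasure.tendsto_iff_forall_integral_tendsto.mpr h
  have hlt : μ F < ENNReal.ofReal η :=
    (ENNReal.lt_ofReal_iff_toReal_lt (measure_ne_top μ F)).mpr hη
  filter_upwards [eventually_lt_of_limsup_lt
    ((FiniteMeasure.limsup_measure_closed_le_of_tendsto hν hF).trans_lt hlt)] with N hN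
  exact ENNReal.toReal_lt_of_lt_ofReal hN

theorem TendstoWeakly.tendsto_setIntegral_setOf_le (hconv : TendstoWeakly μs μ)
    (hY : Continuous Y) {t : ℕ → ℝ} (ht : Tendsto t atTop (𝓝 c)) (hzero : μ {q | Y q = c} = 0)
    (g : Ω →ᵇ ℝ) :
    Tendsto (fun N => ∫ q in {q | Y q ≤ t N}, g q ∂μs N) atTop
      (𝓝 (∫ q in {q | Y q ≤ c}, g q ∂μ)) := by
  refine Metric.tendsto_nhds.mpr fun ε hε => ?_
  obtain ⟨η, hη, hgη⟩ := exists_pos_mul_lt (div_pos hε three_pos) ‖g‖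
  obtain ⟨δ, hδ, hμδ⟩ :=
    exists_pos_measureReal_preimage_closedBall_lt μ hY.measurable hzero hη
  set G : Ω →ᵇ ℝ := g * (rampDown c δ).compContinuous ⟨Y, hY⟩
  have hG : ∀ ν : Measure Ω, ∫ q, G q ∂ν = ∫ q, g q * rampDown c δ (Y q) ∂ν := fun _ => rfl
  have hlim : |∫ q in {q | Y q ≤ c}, g q ∂μ - ∫ q, G q ∂μ| ≤ ε / 3 := by
    grw [hG, abs_setIntegral_sub_integral_rampDown_le μ hY g hδ (by simpa using hδ.le), hμδ]
    exact hgη.le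
  filter_upwards [Metric.tendsto_nhds.mp ht δ hδ,
    hconv.eventually_measureReal_lt (isClosed_closedBall.preimage hY) hμδ,
    Metric.tendsto_nhds.mp (hconv G) (ε / 3) (by positivity)] with N htN hμN hGN
  have hN : |∫ q in {q | Y q ≤ t N}, g q ∂μs N - ∫ q, G q ∂μs N| ≤ ε / 3 := by
    grw [hG, abs_setIntegral_sub_integral_rampDown_le (μs N) hY g hδ htN.le, hμN]
    exact hgη.le
  calc dist (∫ q in {q | Y q ≤ t N}, g q ∂μs N) (∫ q in {q | Y q ≤ c}, g q ∂μ)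
      ≤ dist (∫ q in {q | Y q ≤ t N}, g q ∂μs N) (∫ q, G q ∂μs N)
        + dist (∫ q, G q ∂μs N) (∫ q, G q ∂μ)
        + dist (∫ q, G q ∂μ) (∫ q in {q | Y q ≤ c}, g q ∂μ) := dist_triangle4 _ _ _ _
    _ < ε / 3 + ε / 3 + ε / 3 := by
        rw [dist_comm (∫ q, G q ∂μ)]
        simp only [Real.dist_eq] at hGN ⊢
        linarith
    _ = ε := by ring

end

lemma integral_map_cond {Ω α : Type*} [MeasurableSpace Ω] [TopologicalSpace α]
    [MeasurableSpace α] [OpensMeasurableSpace α] (ν : Measure Ω) {X : Ω → α} (hX : Measurable X)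
    (E : Set Ω) (f : α →ᵇ ℝ) :
    ∫ x, f x ∂(ν[|E]).map X = (ν.real E)⁻¹ * ∫ q in E, f (X q) ∂ν := by
  rw [integral_map hX.aemeasurable f.continuous.aestronglyMeasurable, ProbabilityTheory.cond,
    integral_smul_measure, ENNReal.toReal_inv, smul_eq_mul, measureReal_def]

theorem TendstoWeakly.map_cond {Ω α : Type*} [TopologicalSpace Ω] [MeasurableSpace Ω]
    [OpensMeasurableSpace Ω] [HasOuterApproxClosed Ω] [TopologicalSpace α] [MeasurableSpace α]
    [BorelSpace α] {μs : ℕ → Measure Ω} {μ : Measure Ω} [∀ N, IsFiniteMeasure (μs N)]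
    [IsFiniteMeasure μ] (hconv : TendstoWeakly μs μ) {X : Ω → α} (hX : Continuous X)
    {Y : Ω → ℝ} (hY : Continuous Y) {t : ℕ → ℝ} {c : ℝ} (ht : Tendsto t atTop (𝓝 c))
    (hzero : μ {q | Y q = c} = 0) (hpos : μ {q | Y q ≤ c} ≠ 0) :
    TendstoWeakly (fun N => ((μs N)[|{q | Y q ≤ t N}]).map X) ((μ[|{q | Y q ≤ c}]).map X) := by
  intro f
  simp only [integral_map_cond _ hX.measurable]
  have hmass := hconv.tendsto_setIntegral_setOf_le hY ht hzero 1
  simp only [BoundedContinuousFunction.coe_one, Pi.one_apply, setIntegral_const, smul_eq_mul,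
    mul_one] at hmass
  exact (hmass.inv₀ ((measureReal_ne_zero_iff).mpr hpos)).mul
    (hconv.tendsto_setIntegral_setOf_le hY ht hzero (f.compContinuous ⟨X, hX⟩))

theorem cond_weak_convergence_varying_threshold
    {m : ℕ} (μs : ℕ → Measure ((Fin m → ℝ) × ℝ)) (μ : Measure ((Fin m → ℝ) × ℝ))
    (hμs : ∀ N, IsProbabilityMeasure (μs N)) (hμ : IsProbabilityMeasure μ)
    (hconv : TendstoWeakly μs μ)
    (b : ℕ → ℝ) (binf : ℝ) (hb : Tendsto b atTop (𝓝 binf))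
    (hzero : μ {q | q.2 = binf} = 0) (hpos : 0 < μ {q | q.2 ≤ binf}) :
    TendstoWeakly (fun N => ((μs N)[|{q | q.2 ≤ b N}]).map Prod.fst)
        ((μ[|{q | q.2 ≤ binf}]).map Prod.fst)
    ∧ TendstoWeakly (fun N => ((μs N)[|{q | q.2 ≤ binf}]).map Prod.fst)
        ((μ[|{q | q.2 ≤ binf}]).map Prod.fst) :=
  ⟨hconv.map_cond continuous_fst continuous_snd hb hzero hpos.ne',
    hconv.map_cond continuous_fst continuous_snd tendsto_const_nhds hzero hpos.ne'⟩
end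
end

section
/- Let (A_N, B_N), N = 1, 2, …, be random vectors in ℝ^m × ℝ converging in distribution to (A, B), and let B′_N be real random variables (defined on the same probability spaces) with B_N − B′_N → 0 in probability. Fix b ∈ ℝ with P(B = b) = 0 and P(B ≤ b) > 0. Then the conditional distribution of A_N given {B′_N ≤ b} converges weakly to the conditional distribution of A given {B ≤ b}; in particular, it has the same limit as the conditional distribution of A_N given {B_N ≤ b}. -/
/-!
Conditioning on a set `S` whose boundary is null for the limit law commutes with weak
limits: by the portmanteau theorem, `νₙ(E ∩ S) / νₙ(S) → ν(E ∩ S) / ν(S)` for every `E`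
whose boundary is null for `ν[|S]`, since the boundary of `E ∩ S` is then `ν`-null as well.
Replacing `B_N` by `B'_N` does not change the weak limit of `(A_N, B_N)`: for a bounded
`K`-Lipschitz test function `g`,
`|E g(A_N, B'_N) - E g(A_N, B_N)| ≤ K δ + 2 ‖g‖ P(|B_N - B'_N| ≥ δ)`.
Both conditional laws are therefore images under `Prod.fst` of conditioned laws converging
to `μ[|{q | q.2 ≤ b}]`.
-/

open MeasureTheory ProbabilityTheory Matrix Filter
open scoped NNReal Topology ENNReal

noncomputable section

open Set
open scoped BoundedContinuousFunction

theorem MeasureTheory.Measure.map_cond {α β : Type*} [MeasurableSpace α] [MeasurableSpace β]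
    (μ : Measure α) {f : α → β} (hf : Measurable f) {s : Set β} (hs : MeasurableSet s) :
    (μ.map f)[|s] = (μ[|f ⁻¹' s]).map f := by
  simp only [ProbabilityTheory.cond, Measure.map_apply hf hs, Measure.restrict_map hf hs,
    Measure.map_smul]

theorem TendstoWeakly.map {E F : Type*} [MeasurableSpace E] [TopologicalSpace E]
    [OpensMeasurableSpace E] [MeasurableSpace F] [TopologicalSpace F] [BorelSpace F]
    {μs : ℕ → Measure E} {μ : Measure E} (h : TendstoWeakly μs μ) {g : E → F}
    (hg : Continuous g) : TendstoWeakly (fun N => (μs N).map g) (μ.map g) := by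
  intro f
  have hmap : ∀ ν : Measure E, ∫ y, f y ∂(ν.map g) = ∫ x, f (g x) ∂ν := fun ν =>
    integral_map hg.aemeasurable f.continuous.aestronglyMeasurable
  simp only [hmap]
  exact h (f.compContinuous ⟨g, hg⟩)

theorem MeasureTheory.ProbabilityMeasure.toMeasure_normalize_restrict {X : Type*}
    [MeasurableSpace X] [Nonempty X] (μ : ProbabilityMeasure X) {S : Set X}
    (hμS : (μ : Measure X) S ≠ 0) :
    ((μ.toFiniteMeasure.restrict S).normalize : Measure X) = (μ : Measure X)[|S] := by
  have hμS' : μ S ≠ 0 := by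
    rw [← ProbabilityMeasure.ennreal_coeFn_eq_coeFn_toMeasure] at hμS
    exact_mod_cast hμS
  have hne : μ.toFiniteMeasure.restrict S ≠ 0 := by
    rwa [FiniteMeasure.restrict_nonzero_iff]
  rw [FiniteMeasure.toMeasure_normalize_eq_of_nonzero _ hne, FiniteMeasure.restrict_mass]
  ext t ht
  simp [ProbabilityTheory.cond, ht, ENNReal.coe_inv hμS']

theorem measure_frontier_inter_eq_zero {X : Type*} [MeasurableSpace X] [TopologicalSpace X]
    {μ : Measure X} {S E : Set X} (hS : μ (frontier S) = 0) (hE : μ (S ∩ frontier E) = 0) :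
    μ (frontier (S ∩ E)) = 0 := by
  refine measure_mono_null (fun x hx => ?_) (measure_union_null hS hE)
  rcases frontier_inter_subset S E hx with ⟨h, -⟩ | ⟨h, h'⟩
  · exact Or.inl h
  · rw [closure_eq_self_union_frontier] at h
    rcases h with h | h
    · exact Or.inr ⟨h, h'⟩
    · exact Or.inl h

theorem MeasureTheory.ProbabilityMeasure.tendsto_normalize_restrict_of_null_frontier
    {X ι : Type*} [MeasurableSpace X] [PseudoEMetricSpace X] [OpensMeasurableSpace X] [Nonempty X]
    {L : Filter ι} [L.IsCountablyGenerated] {μs : ι → ProbabilityMeasure X}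
    {μ : ProbabilityMeasure X} (h : Tendsto μs L (𝓝 μ)) {S : Set X} (hS : MeasurableSet S)
    (hfrS : (μ : Measure X) (frontier S) = 0) (hμS : (μ : Measure X) S ≠ 0) :
    Tendsto (fun i => ((μs i).toFiniteMeasure.restrict S).normalize) L
      (𝓝 ((μ.toFiniteMeasure.restrict S).normalize)) := by
  refine tendsto_of_forall_isClosed_limsup_le' fun F hF =>
    limsup_measure_closed_le_of_forall_tendsto_measure (fun {E} _ hfrE => ?_) F hF
  have hlimS := tendsto_measure_of_null_frontier_of_tendsto' h hfrS
  rw [toMeasure_normalize_restrict μ hμS, cond_apply hS] at hfrE ⊢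
  have hSfrE : (μ : Measure X) (S ∩ frontier E) = 0 :=
    (mul_eq_zero.mp hfrE).resolve_left (ENNReal.inv_ne_zero.mpr (measure_ne_top _ _))
  have hcond : ∀ᶠ i in L, (((μs i).toFiniteMeasure.restrict S).normalize : Measure X) E
      = ((μs i : Measure X) S)⁻¹ * (μs i : Measure X) (S ∩ E) :=
    (hlimS.eventually_ne hμS).mono fun i hi => by
      rw [toMeasure_normalize_restrict _ hi, cond_apply hS]
  refine Tendsto.congr' (EventuallyEq.symm hcond) (ENNReal.Tendsto.mul ?_ ?_ ?_ ?_)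
  · exact tendsto_inv_iff.mpr hlimS
  · exact Or.inr (measure_ne_top _ _)
  · exact tendsto_measure_of_null_frontier_of_tendsto' h
      (measure_frontier_inter_eq_zero hfrS hSfrE)
  · exact Or.inr (ENNReal.inv_ne_top.mpr hμS)

theorem tendstoWeakly_cond_of_null_frontier {X : Type*} [MeasurableSpace X]
    [PseudoEMetricSpace X] [OpensMeasurableSpace X] {μs : ℕ → ProbabilityMeasure X}
    {μ : ProbabilityMeasure X} (h : Tendsto μs atTop (𝓝 μ)) {S : Set X} (hS : MeasurableSet S)
    (hfrS : (μ : Measure X) (frontier S) = 0) (hμS : (μ : Measure X) S ≠ 0) :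
    TendstoWeakly (fun N => (μs N : Measure X)[|S]) ((μ : Measure X)[|S]) := by
  have := μ.nonempty
  intro f
  have hlim := ProbabilityMeasure.tendsto_iff_forall_integral_tendsto.mp
    (ProbabilityMeasure.tendsto_normalize_restrict_of_null_frontier h hS hfrS hμS) f
  have hcond : ∀ᶠ N in atTop, (((μs N).toFiniteMeasure.restrict S).normalize : Measure X)
      = (μs N : Measure X)[|S] :=
    ((ProbabilityMeasure.tendsto_measure_of_null_frontier_of_tendsto' h hfrS).eventually_ne
      hμS).mono fun N hN => (μs N).toMeasure_normalize_restrict hN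
  rw [μ.toMeasure_normalize_restrict hμS] at hlim
  exact hlim.congr' (hcond.mono fun N hN => by rw [hN])

theorem abs_integral_comp_sub_integral_comp_le {Ω X : Type*} [MeasurableSpace Ω]
    [MeasurableSpace X] [PseudoMetricSpace X] [SecondCountableTopology X]
    [OpensMeasurableSpace X] (P : Measure Ω) [IsProbabilityMeasure P] {g : X →ᵇ ℝ} {K : ℝ≥0}
    (hg : LipschitzWith K g) {Y Y' : Ω → X} (hY : Measurable Y) (hY' : Measurable Y') {δ : ℝ}
    (hδ : 0 ≤ δ) :
    |∫ ω, g (Y' ω) ∂P - ∫ ω, g (Y ω) ∂P|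
      ≤ K * δ + 2 * ‖g‖ * P.real {ω | δ ≤ dist (Y ω) (Y' ω)} := by
  set D := {ω | δ ≤ dist (Y ω) (Y' ω)}
  have hD : MeasurableSet D := measurableSet_le measurable_const (hY.dist hY')
  have hint : ∀ {Z : Ω → X}, Measurable Z → Integrable (fun ω => g (Z ω)) P := fun hZ =>
    (g.integrable (P.map _)).comp_measurable hZ
  have hpt : ∀ ω, |g (Y' ω) - g (Y ω)| ≤ K * δ + D.indicator (fun _ => 2 * ‖g‖) ω := by
    intro ω
    by_cases hω : ω ∈ D
    · rw [indicator_of_mem hω, ← Real.dist_eq]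
      have := g.dist_le_two_norm (Y' ω) (Y ω)
      have : 0 ≤ K * δ := by positivity
      linarith
    · rw [indicator_of_notMem hω, add_zero, ← Real.dist_eq, dist_comm]
      calc dist (g (Y ω)) (g (Y' ω)) ≤ K * dist (Y ω) (Y' ω) := hg.dist_le_mul _ _
        _ ≤ K * δ := by gcongr; exact (not_le.mp hω).le
  rw [← integral_sub (hint hY') (hint hY)]
  calc |∫ ω, g (Y' ω) - g (Y ω) ∂P|
        ≤ ∫ ω, |g (Y' ω) - g (Y ω)| ∂P := abs_integral_le_integral_abs
    _ ≤ ∫ ω, K * δ + D.indicator (fun _ => 2 * ‖g‖) ω ∂P :=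
      integral_mono ((hint hY').sub (hint hY)).abs
        ((integrable_const _).add ((integrable_const _).indicator hD)) hpt
    _ = K * δ + 2 * ‖g‖ * P.real D := by
      rw [integral_add (integrable_const _) ((integrable_const _).indicator hD),
        integral_indicator_const _ hD]
      simp [mul_comm]

theorem MeasureTheory.ProbabilityMeasure.tendsto_map_of_tendsto_map_of_dist {ι : Type*}
    {L : Filter ι} [L.IsCountablyGenerated] {Ω : ι → Type*} [∀ i, MeasurableSpace (Ω i)]
    (P : ∀ i, ProbabilityMeasure (Ω i)) {X : Type*} [MeasurableSpace X] [PseudoMetricSpace X]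
    [SecondCountableTopology X] [OpensMeasurableSpace X] {Y Y' : ∀ i, Ω i → X}
    (hY : ∀ i, Measurable (Y i)) (hY' : ∀ i, Measurable (Y' i)) {ν : ProbabilityMeasure X}
    (h : Tendsto (fun i => (P i).map (hY i).aemeasurable) L (𝓝 ν))
    (hdist : ∀ δ : ℝ, 0 < δ →
      Tendsto (fun i => (P i : Measure (Ω i)) {ω | δ ≤ dist (Y i ω) (Y' i ω)}) L (𝓝 0)) :
    Tendsto (fun i => (P i).map (hY' i).aemeasurable) L (𝓝 ν) := by
  rw [tendsto_iff_forall_lipschitz_integral_tendsto] at h ⊢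
  rintro f ⟨C, hC⟩ ⟨K, hK⟩
  set g : X →ᵇ ℝ := .mkOfBound ⟨f, hK.continuous⟩ C hC
  have hmap : ∀ {i} {Z : Ω i → X} (hZ : AEMeasurable Z (P i)),
      ∫ x, f x ∂((P i).map hZ) = ∫ ω, g (Z ω) ∂(P i) := fun hZ => by
    rw [ProbabilityMeasure.toMeasure_map]
    exact integral_map hZ g.continuous.aestronglyMeasurable
  have hYlim := h f ⟨C, hC⟩ ⟨K, hK⟩
  simp only [hmap] at hYlim ⊢
  suffices hdiff : Tendsto (fun i => ∫ ω, g (Y' i ω) ∂(P i) - ∫ ω, g (Y i ω) ∂(P i)) L (𝓝 0) by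
    simpa using hdiff.add hYlim
  rw [Metric.tendsto_nhds]
  intro ε hε
  set δ := ε / (2 * (K + 1))
  have hδ : 0 < δ := by positivity
  have hKδ : K * δ < ε / 2 :=
    calc K * δ < (K + 1) * δ := by linarith
      _ = ε / 2 := by simp only [δ]; field_simp
  have hsmall : Tendsto (fun i => 2 * ‖g‖ * (P i : Measure (Ω i)).real
      {ω | δ ≤ dist (Y i ω) (Y' i ω)}) L (𝓝 0) := by
    have := ((ENNReal.tendsto_toReal ENNReal.zero_ne_top).comp (hdist δ hδ)).const_mul
      (2 * ‖g‖)
    rwa [ENNReal.toReal_zero, mul_zero] at this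
  filter_upwards [hsmall.eventually (gt_mem_nhds (half_pos hε))] with i hi
  rw [Real.dist_eq, sub_zero]
  have := abs_integral_comp_sub_integral_comp_le (P i : Measure (Ω i)) (g := g) hK (hY i)
    (hY' i) hδ.le
  linarith

theorem tendstoWeakly_map_cond_preimage {Ω : ℕ → Type*} [∀ N, MeasurableSpace (Ω N)]
    (P : ∀ N, ProbabilityMeasure (Ω N)) {X Z : Type*} [MeasurableSpace X] [PseudoEMetricSpace X]
    [OpensMeasurableSpace X] [MeasurableSpace Z] [TopologicalSpace Z] [BorelSpace Z]
    {Y : ∀ N, Ω N → X} (hY : ∀ N, Measurable (Y N)) {ν : ProbabilityMeasure X}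
    (h : Tendsto (fun N => (P N).map (hY N).aemeasurable) atTop (𝓝 ν)) {S : Set X}
    (hS : MeasurableSet S) (hfrS : (ν : Measure X) (frontier S) = 0)
    (hνS : (ν : Measure X) S ≠ 0) {g : X → Z} (hg : Continuous g) :
    TendstoWeakly (fun N => ((P N : Measure (Ω N))[|Y N ⁻¹' S]).map (g ∘ Y N))
      (((ν : Measure X)[|S]).map g) := by
  have := (tendstoWeakly_cond_of_null_frontier h hS hfrS hνS).map hg
  simpa only [ProbabilityMeasure.toMeasure_map, Measure.map_cond _ (hY _) hS,
    Measure.map_map hg.measurable (hY _)] using this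

theorem cond_weak_convergence_equivalent_statistic
    {m : ℕ} (Ω : ℕ → Type) [∀ N, MeasurableSpace (Ω N)]
    (P : ∀ N, Measure (Ω N)) (hP : ∀ N, IsProbabilityMeasure (P N))
    (A : ∀ N, Ω N → Fin m → ℝ) (B B' : ∀ N, Ω N → ℝ)
    (hA : ∀ N, Measurable (A N)) (hB : ∀ N, Measurable (B N))
    (hB' : ∀ N, Measurable (B' N))
    (μ : Measure ((Fin m → ℝ) × ℝ)) (hμ : IsProbabilityMeasure μ)
    (hconv : TendstoWeakly (fun N => (P N).map (fun ω => (A N ω, B N ω))) μ)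
    (hprob : ∀ δ : ℝ, 0 < δ →
      Tendsto (fun N => P N {ω | δ ≤ |B N ω - B' N ω|}) atTop (𝓝 0))
    (b : ℝ) (hzero : μ {q | q.2 = b} = 0) (hpos : 0 < μ {q | q.2 ≤ b}) :
    TendstoWeakly (fun N => ((P N)[|{ω | B' N ω ≤ b}]).map (A N))
        ((μ[|{q | q.2 ≤ b}]).map Prod.fst)
    ∧ TendstoWeakly (fun N => ((P N)[|{ω | B N ω ≤ b}]).map (A N))
        ((μ[|{q | q.2 ≤ b}]).map Prod.fst) := by
  let Pr : ∀ N, ProbabilityMeasure (Ω N) := fun N => ⟨P N, hP N⟩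
  let ν : ProbabilityMeasure ((Fin m → ℝ) × ℝ) := ⟨μ, hμ⟩
  have hAB : ∀ N, Measurable fun ω => (A N ω, B N ω) := fun N => (hA N).prodMk (hB N)
  have hAB' : ∀ N, Measurable fun ω => (A N ω, B' N ω) :=
    fun N => (hA N).prodMk (hB' N)
  have hS : MeasurableSet {q : (Fin m → ℝ) × ℝ | q.2 ≤ b} := measurable_snd measurableSet_Iic
  have hfrS : μ (frontier {q : (Fin m → ℝ) × ℝ | q.2 ≤ b}) = 0 :=
    measure_mono_null (frontier_le_subset_eq continuous_snd continuous_const) hzero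
  have hlaw : Tendsto (fun N => (Pr N).map (hAB N).aemeasurable) atTop (𝓝 ν) :=
    ProbabilityMeasure.tendsto_iff_forall_integral_tendsto.mpr hconv
  have hlaw' : Tendsto (fun N => (Pr N).map (hAB' N).aemeasurable) atTop (𝓝 ν) :=
    ProbabilityMeasure.tendsto_map_of_tendsto_map_of_dist Pr hAB hAB' hlaw fun δ hδ => by
      simpa [Prod.dist_eq, Real.dist_eq, Pr] using hprob δ hδ
  exact ⟨tendstoWeakly_map_cond_preimage Pr hAB' hlaw' hS hfrS hpos.ne' continuous_fst,
    tendstoWeakly_map_cond_preimage Pr hAB hlaw hS hfrS hpos.ne' continuous_fst⟩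
end
end

section
/- Fix integers Q ≥ 2 and J ≥ 1. Let e ∈ ℝ^{Q−1} have strictly positive entries with Σ_{q=1}^{Q−1} e_q < 1, let R := diag(e₁, …, e_{Q−1}), let 𝟙 denote the (Q−1)×(Q−1) all-ones matrix, let Φ := R − e e^T, and let S be an invertible symmetric J×J matrix. Then (R ⊗ I_J)(Φ^{-1} ⊗ S^{-1})(R ⊗ I_J) = ((R^{-1} − 𝟙) ⊗ S)^{-1}. Equivalently, with Ψ := (Φ^{-1} R) ⊗ S^{-1}, V_Ψ := Φ^{-1} ⊗ S^{-1}, and V := (R^{-1} − 𝟙) ⊗ S, one has Ψ^T V_Ψ^{-1} Ψ = V^{-1}. -/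
/-!
With `R = diag e`, the matrix `Φ = R - e eᵀ` factors as `R (R⁻¹ - 𝟙) R`, hence
`R Φ⁻¹ R = (R⁻¹ - 𝟙)⁻¹`, and the mixed-product rule for Kronecker products gives the first
identity. For the second, `Ψ = V_Ψ (R ⊗ I)` with `V_Ψ` symmetric, so
`Ψᵀ V_Ψ⁻¹ Ψ = (R ⊗ I) V_Ψ (R ⊗ I)`, which is the first identity again. `V_Ψ` is invertible because
the matrix determinant lemma gives `det Φ = (∏ e) (1 - ∑ e)`.
-/

open Matrix
open scoped Kronecker

namespace Matrix

variable {m n : Type*}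

theorem IsSymm.kronecker {α : Type*} [Mul α] {A : Matrix m m α} {B : Matrix n n α}
    (hA : A.IsSymm) (hB : B.IsSymm) : (A ⊗ₖ B).IsSymm := by
  rw [IsSymm, ← kroneckerMap_transpose, hA.eq, hB.eq]

theorem isSymm_vecMulVec_self {α : Type*} [CommMagma α] (v : n → α) :
    (vecMulVec v v).IsSymm :=
  transpose_vecMulVec v v

variable [Fintype n] [DecidableEq n] {α : Type*} [CommRing α]

theorem det_one_sub_vecMulVec (u v : n → α) :
    (1 - vecMulVec u v).det = 1 - v ⬝ᵥ u := by
  rw [sub_eq_add_neg, ← neg_vecMulVec, vecMulVec_eq Unit,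
    det_one_add_replicateCol_mul_replicateRow, dotProduct_neg, ← sub_eq_add_neg]

theorem det_diagonal_sub_vecMulVec_self (e : n → α) :
    (diagonal e - vecMulVec e e).det = (∏ i, e i) * (1 - ∑ i, e i) := by
  have factor : diagonal e - vecMulVec e e = diagonal e * (1 - vecMulVec 1 e) := by
    rw [Matrix.mul_sub, Matrix.mul_one, mul_vecMulVec]
    congr 2
    ext i
    simp [mulVec_diagonal]
  rw [factor, det_mul, det_diagonal, det_one_sub_vecMulVec, dotProduct_one]

theorem mul_inv_sub_vecMulVec_mul {A : Matrix n n α} (hA : IsUnit A.det) (u v : n → α) :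
    A * (A⁻¹ - vecMulVec u v) * A = A - vecMulVec (A *ᵥ u) (v ᵥ* A) := by
  rw [Matrix.mul_sub, Matrix.sub_mul, mul_nonsing_inv _ hA, Matrix.one_mul, mul_vecMulVec,
    vecMulVec_mul]

theorem mul_inv_mul_mul_mul_self {A : Matrix n n α}
    (hA : IsUnit A.det) (M : Matrix n n α) : A * (A * M * A)⁻¹ * A = M⁻¹ := by
  rw [Matrix.mul_inv_rev, Matrix.mul_inv_rev, ← Matrix.mul_assoc, ← Matrix.mul_assoc,
    mul_nonsing_inv _ hA, Matrix.one_mul, Matrix.mul_assoc, nonsing_inv_mul _ hA, Matrix.mul_one]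

theorem diagonal_mul_inv_diagonal_sub_vecMulVec_self_mul_diagonal {K : Type*} [Field K]
    {e : n → K} (he : ∀ i, e i ≠ 0) :
    diagonal e * (diagonal e - vecMulVec e e)⁻¹ * diagonal e
      = ((diagonal e)⁻¹ - of fun _ _ => (1 : K))⁻¹ := by
  have hR : IsUnit (diagonal e).det := by
    rw [det_diagonal, isUnit_iff_ne_zero]
    exact Finset.prod_ne_zero_iff.2 fun i _ => he i
  have ones : (of fun _ _ => (1 : K) : Matrix n n K) = vecMulVec 1 1 := by
    ext; simp [vecMulVec_apply]
  have hΦ : diagonal e - vecMulVec e e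
      = diagonal e * ((diagonal e)⁻¹ - of fun _ _ => (1 : K)) * diagonal e := by
    rw [ones, mul_inv_sub_vecMulVec_mul hR]
    congr 2 <;> ext i <;> simp [mulVec_diagonal, vecMul_diagonal]
  rw [hΦ, mul_inv_mul_mul_mul_self hR]

theorem IsSymm.transpose_mul_inv_mul {V : Matrix n n α} (hV : V.IsSymm)
    (hdet : IsUnit V.det) (B : Matrix n m α) :
    (V * B)ᵀ * V⁻¹ * (V * B) = Bᵀ * V * B := by
  rw [transpose_mul, hV.eq, Matrix.mul_assoc, Matrix.mul_assoc,
    nonsing_inv_mul_cancel_left _ _ hdet, Matrix.mul_assoc]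

end Matrix

theorem multinomial_logistic_wald_identity_general
    (Q J : ℕ)
    (e : Fin (Q - 1) → ℝ) (he : ∀ q, 0 < e q) (hsum : ∑ q, e q < 1)
    (S : Matrix (Fin J) (Fin J) ℝ) (hSsym : S.IsSymm) (hSinv : IsUnit S.det) :
    let R : Matrix (Fin (Q - 1)) (Fin (Q - 1)) ℝ := Matrix.diagonal e
    let One : Matrix (Fin (Q - 1)) (Fin (Q - 1)) ℝ := Matrix.of fun _ _ => (1 : ℝ)
    let Φ : Matrix (Fin (Q - 1)) (Fin (Q - 1)) ℝ := R - vecMulVec e e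
    (R ⊗ₖ (1 : Matrix (Fin J) (Fin J) ℝ)) * (Φ⁻¹ ⊗ₖ S⁻¹)
        * (R ⊗ₖ (1 : Matrix (Fin J) (Fin J) ℝ))
      = ((R⁻¹ - One) ⊗ₖ S)⁻¹
    ∧ ((Φ⁻¹ * R) ⊗ₖ S⁻¹)ᵀ * (Φ⁻¹ ⊗ₖ S⁻¹)⁻¹ * ((Φ⁻¹ * R) ⊗ₖ S⁻¹)
      = ((R⁻¹ - One) ⊗ₖ S)⁻¹ := by
  intro R One Φ
  have hΦ : IsUnit Φ.det := by
    rw [isUnit_iff_ne_zero, det_diagonal_sub_vecMulVec_self]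
    exact mul_ne_zero (Finset.prod_ne_zero_iff.2 fun q _ => (he q).ne') (sub_ne_zero.2 hsum.ne')
  have hΦ_symm : Φ.IsSymm := (isSymm_diagonal e).sub (isSymm_vecMulVec_self e)
  have sandwich : (R ⊗ₖ (1 : Matrix (Fin J) (Fin J) ℝ)) * (Φ⁻¹ ⊗ₖ S⁻¹)
      * (R ⊗ₖ (1 : Matrix (Fin J) (Fin J) ℝ)) = ((R⁻¹ - One) ⊗ₖ S)⁻¹ := by
    rw [← mul_kronecker_mul, ← mul_kronecker_mul, Matrix.one_mul, Matrix.mul_one,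
      diagonal_mul_inv_diagonal_sub_vecMulVec_self_mul_diagonal fun q => (he q).ne',
      inv_kronecker]
  refine ⟨sandwich, ?_⟩
  have hVΨ : IsUnit (Φ⁻¹ ⊗ₖ S⁻¹).det := by
    rw [← inv_kronecker]
    exact isUnit_nonsing_inv_det _ (by rw [det_kronecker]; exact (hΦ.pow _).mul (hSinv.pow _))
  have hΨ : (Φ⁻¹ * R) ⊗ₖ S⁻¹ = (Φ⁻¹ ⊗ₖ S⁻¹) * (R ⊗ₖ (1 : Matrix (Fin J) (Fin J) ℝ)) := by
    rw [← mul_kronecker_mul, Matrix.mul_one]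
  rw [hΨ, (hΦ_symm.inv.kronecker hSsym.inv).transpose_mul_inv_mul hVΨ,
    ← kroneckerMap_transpose, (isSymm_diagonal e).eq, transpose_one, sandwich]

theorem multinomial_logistic_wald_identity
    (Q J : ℕ) (hQ : 2 ≤ Q) (hJ : 1 ≤ J)
    (e : Fin (Q - 1) → ℝ) (he : ∀ q, 0 < e q) (hsum : ∑ q, e q < 1)
    (S : Matrix (Fin J) (Fin J) ℝ) (hSsym : S.IsSymm) (hSinv : IsUnit S.det) :
    let R : Matrix (Fin (Q - 1)) (Fin (Q - 1)) ℝ := Matrix.diagonal e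
    let One : Matrix (Fin (Q - 1)) (Fin (Q - 1)) ℝ := Matrix.of fun _ _ => (1 : ℝ)
    let Φ : Matrix (Fin (Q - 1)) (Fin (Q - 1)) ℝ := R - vecMulVec e e
    (R ⊗ₖ (1 : Matrix (Fin J) (Fin J) ℝ)) * (Φ⁻¹ ⊗ₖ S⁻¹)
        * (R ⊗ₖ (1 : Matrix (Fin J) (Fin J) ℝ))
      = ((R⁻¹ - One) ⊗ₖ S)⁻¹
    ∧ ((Φ⁻¹ * R) ⊗ₖ S⁻¹)ᵀ * (Φ⁻¹ ⊗ₖ S⁻¹)⁻¹ * ((Φ⁻¹ * R) ⊗ₖ S⁻¹)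
      = ((R⁻¹ - One) ⊗ₖ S)⁻¹ :=
  multinomial_logistic_wald_identity_general Q J e he hsum S hSsym hSinv
end
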